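/- arXiv:math/0005008 — 5 statements merged into one kernel-verified Lean document; each statement's English description precedes it below -/
import Mathlib

section
/- For every natural number n and nonnegative integer m, the coefficient of z^m in the formal power series (1+y)^{n+1}/(1 - \lambda y), where z = y/(1+y)^{\lambda+1} (i.e., y is the formal power series inverse), equals binomial(n + (\lambda+1)m, m). -/
open PowerSeries

/-!
The coefficients `b n k = C(n + (λ+1)k, k)` satisfy `(k+1) b n (k+1) = (n + λ + 1 + (λ+1)k) b (n+λ) k`,
i.e. the series `G n = ∑ b n k X^k` satisfy `G n' = (n+λ+1) G (n+λ) + (λ+1) X G (n+λ)'`; together with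
`G n (0) = 1` this determines the family coefficient by coefficient. The closed forms
`(1+y)^(n+1) / (1-λy)` satisfy the same recursion, because differentiating `y = X (1+y)^(λ+1)` gives
`y' (1 - λy) = (1+y)^(λ+2)`.
-/

theorem coeff_X_mul_derivative {R : Type*} [CommSemiring R] (f : R⟦X⟧) (k : ℕ) :
    coeff k (X * d⁄dX R f) = k * coeff k f := by
  cases k with
  | zero => simp
  | succ k => rw [coeff_succ_X_mul, coeff_derivative, mul_comm]; push_cast; rfl

theorem eq_mk_choose_of_derivative_recursion {K : Type*} [Field K] [CharZero K] (lam : ℕ)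
    {G : ℕ → K⟦X⟧} (hG0 : ∀ n, constantCoeff (G n) = 1)
    (hG : ∀ n, d⁄dX K (G n) =
      C ((n + lam + 1 : ℕ) : K) * G (n + lam) + C ((lam + 1 : ℕ) : K) * (X * d⁄dX K (G (n + lam))))
    (n : ℕ) : G n = mk fun k => ((n + (lam + 1) * k).choose k : K) := by
  ext k
  rw [coeff_mk]
  induction k generalizing n with
  | zero => simpa using hG0 n
  | succ k ih =>
    have hk := congrArg (coeff k) (hG n)
    rw [coeff_derivative, map_add, coeff_C_mul, coeff_C_mul, coeff_X_mul_derivative, ih] at hk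
    have hchoose := congrArg (Nat.cast (R := K))
      (Nat.add_one_mul_choose_eq (n + lam + (lam + 1) * k) k)
    rw [show n + lam + (lam + 1) * k + 1 = n + (lam + 1) * (k + 1) by ring] at hchoose
    push_cast at hk hchoose
    apply mul_right_cancel₀ (Nat.cast_add_one_ne_zero k : (k : K) + 1 ≠ 0)
    linear_combination hk + hchoose

theorem derivative_mul_one_sub_mul_eq {A : Type*} [CommRing A] (lam : ℕ) {y : A⟦X⟧}
    (hy : y = X * (1 + y) ^ (lam + 1)) :
    d⁄dX A y * (1 - lam * y) = (1 + y) ^ (lam + 2) := by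
  have hd := congrArg (d⁄dX A) hy
  rw [Derivation.leibniz, derivative_X, derivative_pow, map_add, derivative_one, zero_add,
    Nat.add_sub_cancel, smul_eq_mul, smul_eq_mul] at hd
  push_cast at hd
  linear_combination (1 + y) * hd - (lam + 1) * d⁄dX A y * hy

section ClosedForm

variable {K : Type*} [Field K] (lam : ℕ) {y : K⟦X⟧}

theorem derivative_pow_mul_inv (hy : y = X * (1 + y) ^ (lam + 1))
    (hQ : (1 - lam * y) * (1 - lam * y)⁻¹ = 1) (m : ℕ) :
    d⁄dX K ((1 + y) ^ (m + 1) * (1 - lam * y)⁻¹) =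
      (m + 1) * (1 + y) ^ (m + lam + 2) * (1 - lam * y)⁻¹ ^ 2
        + lam * (1 + y) ^ (m + lam + 3) * (1 - lam * y)⁻¹ ^ 3 := by
  have hy' := derivative_mul_one_sub_mul_eq lam hy
  set R := (1 - (lam : K⟦X⟧) * y)⁻¹
  have hdQ : d⁄dX K (1 - lam * y) = -lam * d⁄dX K y := by
    rw [map_sub, derivative_one, ← map_natCast (C (R := K)), Derivation.leibniz, derivative_C,
      smul_zero, add_zero, smul_eq_mul, map_natCast]
    ring
  rw [Derivation.leibniz, derivative_inv', hdQ, derivative_pow, map_add, derivative_one, zero_add,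
    Nat.add_sub_cancel, smul_eq_mul, smul_eq_mul]
  push_cast
  -- `R * hy' - y' * hQ` says `y' = (1+y)^(λ+2) R`
  linear_combination ((m + 1) * (1 + y) ^ m * R + lam * (1 + y) ^ (m + 1) * R ^ 2)
    * (R * hy' - d⁄dX K y * hQ)

theorem derivative_pow_mul_inv_recursion (hy : y = X * (1 + y) ^ (lam + 1))
    (hQ : (1 - lam * y) * (1 - lam * y)⁻¹ = 1) (m : ℕ) :
    d⁄dX K ((1 + y) ^ (m + 1) * (1 - lam * y)⁻¹) =
      C ((m + lam + 1 : ℕ) : K) * ((1 + y) ^ (m + lam + 1) * (1 - lam * y)⁻¹)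
        + C ((lam + 1 : ℕ) : K) * (X * d⁄dX K ((1 + y) ^ (m + lam + 1) * (1 - lam * y)⁻¹)) := by
  rw [derivative_pow_mul_inv lam hy hQ, derivative_pow_mul_inv lam hy hQ]
  simp only [map_natCast]
  push_cast
  set R := (1 - (lam : K⟦X⟧) * y)⁻¹
  linear_combination (1 + y) ^ (m + lam + 1) * (lam * (1 + y) * R ^ 2 + (m + lam + 1) * R) * hQ
    + (lam + 1) * ((m + lam + 1) * (1 + y) ^ (m + lam + 1) * R ^ 2
      + lam * (1 + y) ^ (m + lam + 2) * R ^ 3) * hy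

end ClosedForm

theorem coeff_lagrange_family_general (lam n : ℕ) (y : PowerSeries ℚ)
    (hy : y = PowerSeries.X * (1 + y) ^ (lam + 1)) :
    (PowerSeries.mk fun k => ((n + (lam + 1) * k).choose k : ℚ)) *
      (1 - (lam : PowerSeries ℚ) * y) = (1 + y) ^ (n + 1) := by
  have hy0 : constantCoeff y = 0 := X_dvd_iff.mp ⟨_, hy⟩
  have hQ : (1 - lam * y) * (1 - lam * y)⁻¹ = 1 :=
    PowerSeries.mul_inv_cancel _ (by simp [hy0])
  have hG := eq_mk_choose_of_derivative_recursion lam (G := fun m => (1 + y) ^ (m + 1) * (1 - lam * y)⁻¹)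
    (fun m => by simp [hy0]) (derivative_pow_mul_inv_recursion lam hy hQ) n
  rw [← hG, mul_assoc, mul_comm _ (1 - _), hQ, mul_one]

/-- Σ_{k≥0} C(n+(λ+1)k, k) z^k = (1+y)^{n+1}/(1-λ y), where y = z(1+y)^{λ+1}. -/
theorem coeff_lagrange_family (lam n : ℕ) (y : PowerSeries ℚ)
    (h0 : PowerSeries.constantCoeff y = 0)
    (hy : y = PowerSeries.X * (1 + y) ^ (lam + 1)) :
    (PowerSeries.mk fun k => ((n + (lam + 1) * k).choose k : ℚ)) *
      (1 - (lam : PowerSeries ℚ) * y) = (1 + y) ^ (n + 1) :=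
  coeff_lagrange_family_general lam n y hy
end

section
/- The identity sum_{k>=0} binomial(n+(\lambda+1)k, k) z^k = (sum_{k>=0} binomial((\lambda+1)k, k) z^k) * (sum_{k>=0} binomial((\lambda+1)k, k) z^k/(1+\lambda k))^n holds as an identity of formal power series over the rationals. -/
/-!
Write `t = λ + 1` and `A n = ∑ₖ C(n + tk, k) zᵏ`. Pascal's rule gives `A (n + 1) = A n + z A (n + t)`,
and a family obeying this recurrence is determined by its member at `0`: the difference of two such
families is divisible by every power of `z`, by induction on the power and then on the index.
The combinations `F r = A r - t z A (r + λ)` obey the same recurrence and `F 0 = 1`, so comparing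
`r ↦ F (r + s)` with `r ↦ F r F s` gives `F r = (F 1) ^ r`, and comparing `A` with `n ↦ A 0 F n`
gives `A n = A 0 (F 1) ^ n`. Finally `F 1 = ∑ₖ C(tk, k) zᵏ / (1 + λk)` by a direct computation.
-/

open PowerSeries

namespace PowerSeries

variable {R : Type*} [CommRing R]

theorem eq_of_forall_succ_eq_add_X_mul {d : ℕ} {F G : ℕ → R⟦X⟧}
    (hF : ∀ n, F (n + 1) = F n + X * F (n + d)) (hG : ∀ n, G (n + 1) = G n + X * G (n + d))
    (h0 : F 0 = G 0) : F = G := by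
  have hdvd : ∀ k n, (X : R⟦X⟧) ^ k ∣ F n - G n := by
    intro k
    induction k with
    | zero => simp
    | succ k ihk =>
      intro n
      induction n with
      | zero => simp [h0]
      | succ n ihn =>
        have hdiff : F (n + 1) - G (n + 1) = (F n - G n) + X * (F (n + d) - G (n + d)) := by
          rw [hF, hG]; ring
        rw [hdiff]
        exact dvd_add ihn (pow_succ' (X : R⟦X⟧) k ▸ mul_dvd_mul_left X (ihk _))
  funext n
  refine sub_eq_zero.mp (ext fun m => ?_)
  simpa using X_pow_dvd_iff.mp (hdvd (m + 1) n) m m.lt_succ_self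

variable (R) in
noncomputable def chooseSeries (lam n : ℕ) : R⟦X⟧ :=
  mk fun k => ((n + (lam + 1) * k).choose k : R)

variable (R) in
/-- The coefficients are the Fuss–Catalan numbers `r / ((λ+1)k + r) * C((λ+1)k + r, k)`; this form
avoids the `0 / 0` at `r = k = 0`. -/
noncomputable def fussCatalanSeries (lam r : ℕ) : R⟦X⟧ :=
  chooseSeries R lam r - (lam + 1) • (X * chooseSeries R lam (r + lam))

variable (lam : ℕ)

theorem chooseSeries_succ (n : ℕ) :
    chooseSeries R lam (n + 1) =
      chooseSeries R lam n + X * chooseSeries R lam (n + (lam + 1)) := by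
  ext k
  cases k with
  | zero => simp [chooseSeries]
  | succ k =>
    rw [map_add, coeff_succ_X_mul]
    simp only [chooseSeries, coeff_mk]
    rw [show n + 1 + (lam + 1) * (k + 1) = n + (lam + 1) * (k + 1) + 1 by ring,
      show n + (lam + 1) + (lam + 1) * k = n + (lam + 1) * (k + 1) by ring, Nat.choose_succ_succ']
    push_cast
    ring

theorem fussCatalanSeries_succ (r : ℕ) :
    fussCatalanSeries R lam (r + 1) =
      fussCatalanSeries R lam r + X * fussCatalanSeries R lam (r + (lam + 1)) := by
  simp only [fussCatalanSeries]
  rw [show r + 1 + lam = r + lam + 1 by ring, chooseSeries_succ, chooseSeries_succ,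
    show r + lam + (lam + 1) = r + (lam + 1) + lam by ring]
  ring

theorem fussCatalanSeries_zero : fussCatalanSeries R lam 0 = 1 := by
  ext k
  cases k with
  | zero => simp [fussCatalanSeries, chooseSeries]
  | succ k =>
    have hchoose :
        ((lam + 1) * (k + 1)).choose (k + 1) = (lam + 1) * (lam + (lam + 1) * k).choose k := by
      have habsorb := Nat.add_one_mul_choose_eq (lam + (lam + 1) * k) k
      rw [show lam + (lam + 1) * k + 1 = (lam + 1) * (k + 1) by ring] at habsorb
      exact Nat.eq_of_mul_eq_mul_right (by omega) (habsorb.symm.trans (by ring))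
    rw [fussCatalanSeries, map_sub, map_nsmul, coeff_succ_X_mul]
    simp [chooseSeries, hchoose]

theorem fussCatalanSeries_add (r s : ℕ) :
    fussCatalanSeries R lam (r + s) = fussCatalanSeries R lam r * fussCatalanSeries R lam s := by
  have hfun := eq_of_forall_succ_eq_add_X_mul (F := fun r => fussCatalanSeries R lam (r + s))
    (G := fun r => fussCatalanSeries R lam r * fussCatalanSeries R lam s)
    (fun r => by simpa [add_right_comm] using fussCatalanSeries_succ lam (r + s))
    (fun r => by simp only [fussCatalanSeries_succ]; ring)
    (by simp [fussCatalanSeries_zero])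
  exact congrFun hfun r

theorem fussCatalanSeries_eq_pow (r : ℕ) :
    fussCatalanSeries R lam r = fussCatalanSeries R lam 1 ^ r := by
  induction r with
  | zero => exact fussCatalanSeries_zero lam
  | succ r ih => rw [fussCatalanSeries_add, ih, pow_succ]

theorem chooseSeries_eq_mul_fussCatalanSeries (n : ℕ) :
    chooseSeries R lam n = chooseSeries R lam 0 * fussCatalanSeries R lam n := by
  have hfun := eq_of_forall_succ_eq_add_X_mul (F := chooseSeries R lam)
    (G := fun n => chooseSeries R lam 0 * fussCatalanSeries R lam n)
    (chooseSeries_succ lam) (fun n => by simp only [fussCatalanSeries_succ]; ring)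
    (by simp [fussCatalanSeries_zero])
  exact congrFun hfun n

theorem fussCatalanSeries_one {K : Type*} [Field K] [CharZero K] :
    fussCatalanSeries K lam 1 = mk fun k => (((lam + 1) * k).choose k : K) / (1 + lam * k) := by
  ext k
  cases k with
  | zero => simp [fussCatalanSeries, chooseSeries]
  | succ k =>
    rw [fussCatalanSeries, map_sub, map_nsmul, coeff_succ_X_mul]
    simp only [chooseSeries, coeff_mk]
    rw [show 1 + (lam + 1) * (k + 1) = (lam + 1) * (k + 1) + 1 by ring,
      show 1 + lam + (lam + 1) * k = (lam + 1) * (k + 1) by ring, Nat.choose_succ_succ']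
    have hratio := Nat.choose_succ_right_eq ((lam + 1) * (k + 1)) k
    rw [show (lam + 1) * (k + 1) - k = 1 + lam * (k + 1) by
      rw [Nat.sub_eq_iff_eq_add (by nlinarith)]; ring] at hratio
    have hne : (1 + lam * (k + 1 : ℕ) : K) ≠ 0 := by
      exact_mod_cast (by omega : 1 + lam * (k + 1) ≠ 0)
    rw [eq_div_iff hne]
    have hratioK := congrArg (Nat.cast : ℕ → K) hratio
    push_cast at hratioK ⊢
    linear_combination (lam : K) * hratioK

end PowerSeries

/-- Σ_k C(n+(λ+1)k,k) z^k = (Σ_k C((λ+1)k,k) z^k) · (Σ_k C((λ+1)k,k) z^k/(1+λk))^n. -/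
theorem choose_gf_identity (lam n : ℕ) :
    (PowerSeries.mk fun k => ((n + (lam + 1) * k).choose k : ℚ)) =
      (PowerSeries.mk fun k => (((lam + 1) * k).choose k : ℚ)) *
        (PowerSeries.mk fun k => ((((lam + 1) * k).choose k : ℚ) / (1 + lam * k))) ^ n := by
  calc chooseSeries ℚ lam n
      = chooseSeries ℚ lam 0 * fussCatalanSeries ℚ lam 1 ^ n := by
        rw [chooseSeries_eq_mul_fussCatalanSeries, fussCatalanSeries_eq_pow]
    _ = _ := by simp [fussCatalanSeries_one, chooseSeries]
end

section
/- For every n >= 1, the Takeuchi number T_n is at least the Bell number B_n, i.e., B_n <= T_n. -/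
def bell : ℕ → ℕ
  | 0 => 1
  | n + 1 => ∑ k ∈ Finset.range (n + 1), Nat.choose n k * bell (n - k)
decreasing_by exact Nat.lt_succ_of_le (Nat.sub_le n k)

def catalanNum (k : ℕ) : ℕ := Nat.choose (2 * k) k / (k + 1)

def takeuchi : ℕ → ℕ
  | 0 => 0
  | n + 1 =>
      (∑ k ∈ Finset.range (n + 1),
        (Nat.choose (n + k) n - Nat.choose (n + k) (n + 1)) * takeuchi (n - k)) +
      ∑ k ∈ Finset.range (n + 1), catalanNum (k + 1)
decreasing_by exact Nat.lt_succ_of_le (Nat.sub_le n k)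

lemma lemA : ∀ n k : ℕ, k ≤ n + 1 →
    Nat.choose n k + Nat.choose (n + k) (n + 1) ≤ Nat.choose (n + k) n := by
  intro n
  induction n with
  | zero =>
    intro k hk
    interval_cases k <;> simp
  | succ m ih =>
    intro k
    induction k with
    | zero => intro _; simp
    | succ j ihj =>
      intro hk
      rcases Nat.lt_or_ge j (m + 1) with hj | hj
      · have h1 : Nat.choose m (j + 1) + Nat.choose (m + j + 1) (m + 1) ≤
            Nat.choose (m + j + 1) m := by
          have := ih (j + 1) (by omega)
          rwa [show m + (j + 1) = m + j + 1 by omega] at this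
        have h2 : Nat.choose (m + 1) j + Nat.choose (m + j + 1) (m + 2) ≤
            Nat.choose (m + j + 1) (m + 1) := by
          have := ihj (by omega)
          rwa [show m + 1 + j = m + j + 1 by omega, show m + 1 + 1 = m + 2 by omega] at this
        rw [show m + 1 + (j + 1) = m + j + 2 by omega, show m + 1 + 1 = m + 2 by omega]
        have pA : Nat.choose (m + j + 2) (m + 2) =
            Nat.choose (m + j + 1) (m + 1) + Nat.choose (m + j + 1) (m + 2) :=
          Nat.choose_succ_succ (m + j + 1) (m + 1)
        have pB : Nat.choose (m + j + 2) (m + 1) =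
            Nat.choose (m + j + 1) m + Nat.choose (m + j + 1) (m + 1) :=
          Nat.choose_succ_succ (m + j + 1) m
        have pC : Nat.choose (m + 1) (j + 1) =
            Nat.choose m j + Nat.choose m (j + 1) := Nat.choose_succ_succ m j
        have mono : Nat.choose m j ≤ Nat.choose (m + 1) j :=
          Nat.choose_le_choose j (Nat.le_succ m)
        omega
      · have hj' : j = m + 1 := by omega
        subst hj'
        clear ihj
        have h0 : Nat.choose (m + 1) (m + 2) = 0 :=
          Nat.choose_eq_zero_of_lt (by omega)
        rw [show m + 1 + (m + 1 + 1) = 2 * m + 3 by omega, show m + 1 + 1 = m + 2 by omega]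
        have hs := Nat.choose_symm (show m + 2 ≤ 2 * m + 3 by omega)
        rw [show 2 * m + 3 - (m + 2) = m + 1 by omega] at hs
        omega

lemma catalanNum_one : catalanNum 1 = 1 := by decide

theorem bell_le_takeuchi : ∀ n : ℕ, 1 ≤ n → bell n ≤ takeuchi n := by
  intro n
  induction n using Nat.strong_induction_on with
  | _ n ih =>
    match n with
    | 0 => intro h; omega
    | n + 1 =>
      intro _
      rw [bell, takeuchi]
      have hbell : ∑ k ∈ Finset.range (n + 1), Nat.choose n k * bell (n - k) =
          (∑ k ∈ Finset.range n, Nat.choose n k * bell (n - k)) + 1 := by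
        rw [Finset.sum_range_succ]
        simp [bell]
      have hsum : (∑ k ∈ Finset.range n, Nat.choose n k * bell (n - k)) ≤
          ∑ k ∈ Finset.range n,
            (Nat.choose (n + k) n - Nat.choose (n + k) (n + 1)) * takeuchi (n - k) := by
        apply Finset.sum_le_sum
        intro k hk
        have hkn : k < n := Finset.mem_range.mp hk
        have hc : Nat.choose n k ≤ Nat.choose (n + k) n - Nat.choose (n + k) (n + 1) :=
          Nat.le_sub_of_add_le (lemA n k (by omega))
        have hb : bell (n - k) ≤ takeuchi (n - k) := ih (n - k) (by omega) (by omega)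
        exact Nat.mul_le_mul hc hb
      have htr : (∑ k ∈ Finset.range n,
            (Nat.choose (n + k) n - Nat.choose (n + k) (n + 1)) * takeuchi (n - k)) ≤
          ∑ k ∈ Finset.range (n + 1),
            (Nat.choose (n + k) n - Nat.choose (n + k) (n + 1)) * takeuchi (n - k) :=
        Finset.sum_le_sum_of_subset (Finset.range_subset_range.mpr (Nat.le_succ n))
      have hcat : 1 ≤ ∑ k ∈ Finset.range (n + 1), catalanNum (k + 1) := by
        have h : catalanNum (0 + 1) ≤ ∑ k ∈ Finset.range (n + 1), catalanNum (k + 1) :=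
          Finset.single_le_sum (f := fun k => catalanNum (k + 1)) (fun i _ => Nat.zero_le _) (show (0:ℕ) ∈ Finset.range (n + 1) from Finset.mem_range.mpr (Nat.succ_pos n))
        have e : catalanNum (0 + 1) = 1 := by decide
        omega
      omega
end

section
/- Dobinski's formula: for every natural number n, the Bell number satisfies B_n = (1/e) * sum_{m=0}^{\infty} m^n / m!, where the infinite series converges. -/
open Finset

lemma bell_succ (n : ℕ) : (bell (n+1) : ℝ) = ∑ k ∈ range (n+1), (n.choose k : ℝ) * bell k := by
  rw [bell]
  push_cast
  rw [← Finset.sum_range_reflect]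
  refine Finset.sum_congr rfl fun k hk => ?_
  rw [Finset.mem_range, Nat.lt_succ_iff] at hk
  simp only [Nat.add_sub_cancel]
  rw [Nat.choose_symm hk, Nat.sub_sub_self hk]

lemma dob_aux : ∀ n : ℕ, Summable (fun m : ℕ => (m : ℝ) ^ n / (Nat.factorial m : ℝ)) ∧
    ∑' m : ℕ, (m : ℝ) ^ n / (Nat.factorial m : ℝ) = Real.exp 1 * bell n := by
  intro n
  induction n using Nat.strong_induction_on with
  | _ n ih =>
    match n with
    | 0 =>
      have hs : Summable (fun m : ℕ => (m : ℝ) ^ 0 / (Nat.factorial m : ℝ)) := by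
        simpa using Real.summable_pow_div_factorial 1
      refine ⟨hs, ?_⟩
      have := Real.exp_eq_exp_ℝ
      rw [this, NormedSpace.exp_eq_tsum_div]
      simp [bell]
    | n + 1 =>
      set g : ℕ → ℕ → ℝ := fun k m => (m : ℝ) ^ k / (Nat.factorial m : ℝ) with hg
      have hsumk : ∀ k ∈ range (n+1), Summable (fun m => (n.choose k : ℝ) * g k m) := by
        intro k hk
        exact ((ih k (Finset.mem_range.mp hk)).1).mul_left _
      have hshift : ∀ m : ℕ, g (n+1) (m+1) = ∑ k ∈ range (n+1), (n.choose k : ℝ) * g k m := by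
        intro m
        have h1 : g (n+1) (m+1) = ((m : ℝ) + 1) ^ n / (Nat.factorial m : ℝ) := by
          simp only [hg]
          rw [Nat.factorial_succ]
          push_cast
          rw [pow_succ]
          have hm : (Nat.factorial m : ℝ) ≠ 0 := by positivity
          field_simp
        rw [h1, add_pow]
        rw [Finset.sum_div]
        refine Finset.sum_congr rfl fun k hk => ?_
        simp only [hg, one_pow, mul_one]
        ring
      have hsum1 : Summable (fun m => g (n+1) (m+1)) := by
        rw [funext hshift]
        exact summable_sum hsumk
      have hsum : Summable (g (n+1)) := (summable_nat_add_iff 1).mp hsum1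
      refine ⟨hsum, ?_⟩
      rw [Summable.tsum_eq_zero_add hsum]
      have h0 : g (n+1) 0 = 0 := by simp [hg]
      rw [h0, zero_add, funext hshift, Summable.tsum_finsetSum hsumk]
      have : ∀ k ∈ range (n+1), ∑' m : ℕ, (n.choose k : ℝ) * g k m
          = (n.choose k : ℝ) * (Real.exp 1 * bell k) := by
        intro k hk
        rw [tsum_mul_left, (ih k (Finset.mem_range.mp hk)).2]
      rw [Finset.sum_congr rfl this, bell_succ, Finset.mul_sum]
      refine Finset.sum_congr rfl fun k _ => by ring

/-- Dobinski's formula: B_n = (1/e) Σ_{m≥0} m^n / m!. -/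
theorem dobinski (n : ℕ) :
    Summable (fun m : ℕ => (m : ℝ) ^ n / (Nat.factorial m : ℝ)) ∧
    (bell n : ℝ) =
      (1 / Real.exp 1) * ∑' m : ℕ, (m : ℝ) ^ n / (Nat.factorial m : ℝ) := by
  obtain ⟨hs, he⟩ := dob_aux n
  refine ⟨hs, ?_⟩
  rw [he, one_div, ← mul_assoc, inv_mul_cancel₀ (Real.exp_ne_zero 1), one_mul]
end

section
/- For every n >= 1, sum_{k=0}^{n} (binomial(n+k, n) - binomial(n+k, n+1)) = Catalan(n+1) = binomial(2n+2, n+1)/(n+2). -/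
open Finset

lemma hockey1 (n m : ℕ) :
    ∑ k ∈ range (m + 1), Nat.choose (n + k) n = Nat.choose (n + m + 1) (n + 1) := by
  induction m with
  | zero => simp
  | succ m ih =>
    rw [sum_range_succ, ih]
    have e1 : n + (m + 1) + 1 = (n + m + 1) + 1 := by ring
    have e2 : n + (m + 1) = n + m + 1 := by ring
    rw [e1, e2, Nat.choose_succ_succ' (n + m + 1) n]
    omega

lemma hockey2 (n m : ℕ) :
    ∑ k ∈ range (m + 1), Nat.choose (n + k) (n + 1) = Nat.choose (n + m + 1) (n + 2) := by
  induction m with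
  | zero => simp [Nat.choose_eq_zero_of_lt]
  | succ m ih =>
    rw [sum_range_succ, ih]
    have e1 : n + (m + 1) + 1 = (n + m + 1) + 1 := by ring
    have e2 : n + (m + 1) = n + m + 1 := by ring
    rw [e1, e2, Nat.choose_succ_succ' (n + m + 1) (n + 1)]
    have e3 : n + 1 + 1 = n + 2 := rfl
    rw [e3]
    omega

theorem sum_ballot_eq_catalan (n : ℕ) (hn : 1 ≤ n) :
    ∑ k ∈ Finset.range (n + 1),
      (Nat.choose (n + k) n - Nat.choose (n + k) (n + 1)) =
    Nat.choose (2 * n + 2) (n + 1) / (n + 2) := by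
  have hle : ∀ k ∈ Finset.range (n + 1),
      Nat.choose (n + k) (n + 1) ≤ Nat.choose (n + k) n := by
    intro k hk
    simp only [Finset.mem_range] at hk
    have h := Nat.choose_succ_right_eq (n + k) n
    have hk' : n + k - n = k := by omega
    rw [hk'] at h
    have h2 : Nat.choose (n + k) (n + 1) * (n + 1) ≤ Nat.choose (n + k) n * (n + 1) := by
      rw [h]; exact Nat.mul_le_mul le_rfl (by omega)
    exact Nat.le_of_mul_le_mul_right h2 (by omega)
  rw [Finset.sum_tsub_distrib _ hle, hockey1, hockey2]
  set A := Nat.choose (n + n + 1) (n + 1) with hA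
  set B := Nat.choose (n + n + 1) (n + 2) with hB
  have h1 : B * (n + 2) = A * n := by
    have h := Nat.choose_succ_right_eq (n + n + 1) (n + 1)
    have e : n + n + 1 - (n + 1) = n := by omega
    rw [e] at h
    exact h
  have hBA : B ≤ A := by
    have : B * (n + 2) ≤ A * (n + 2) := by
      rw [h1]; exact Nat.mul_le_mul le_rfl (by omega)
    exact Nat.le_of_mul_le_mul_right this (by omega)
  have h2 : Nat.choose (2 * n + 2) (n + 1) = 2 * A := by
    have e : 2 * n + 2 = (n + n + 1) + 1 := by ring
    rw [e, Nat.choose_succ_succ' (n + n + 1) n]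
    have hs : Nat.choose (n + n + 1) n = A := by
      rw [hA]
      have e2 : n + n + 1 = 2 * n + 1 := by ring
      rw [e2, Nat.choose_symm_half]
    rw [hs]; omega
  have key : (A - B) * (n + 2) = Nat.choose (2 * n + 2) (n + 1) := by
    rw [tsub_mul, h1, h2]
    have : A * (n + 2) - A * n = 2 * A := by
      rw [Nat.mul_comm A, Nat.mul_comm A n, ← Nat.sub_mul]
      have : n + 2 - n = 2 := by omega
      rw [this]
    omega
  rw [← key, Nat.mul_div_cancel _ (by omega : 0 < n + 2)]
end
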